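/- For every p ≥ 1 there exists a constant C_p ≥ 1 such that for every finite metric space (X,d) there exists a non-expansive map f: X → ℝ (i.e., |f(x)−f(y)| ≤ d(x,y) for all x,y ∈ X) satisfying Σ_{u,v∈X} d(u,v)^p ≤ C_p · α(X,d)^p · Σ_{u,v∈X} |f(u)−f(v)|^p. -/

import Mathlib

noncomputable section

open scoped Classical

namespace Formal

/-- A random partition of a finite set `X`: a finitely supported probability distribution
over partitions of `X`, a partition being encoded by the map sending each point to its
block. -/
structure RandPartition (X : Type) [Fintype X] [DecidableEq X] where
  prob : (X → Finset X) → ℝ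
  nonneg : ∀ P, 0 ≤ prob P
  sum_one : ∑ P : X → Finset X, prob P = 1
  isPartition : ∀ P, prob P ≠ 0 → ∀ x : X, x ∈ P x ∧ ∀ y ∈ P x, P y = P x

/-- A random partition is `Δ`-bounded (w.r.t. the distance `d`) if every block of every
partition in its support has diameter at most `Δ`. -/
def RandPartition.IsBounded {X : Type} [Fintype X] [DecidableEq X]
    (μ : RandPartition X) (d : X → X → ℝ) (Δ : ℝ) : Prop :=
  ∀ P, μ.prob P ≠ 0 → ∀ x : X, ∀ y ∈ P x, ∀ z ∈ P x, d y z ≤ Δ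

/-- A random partition is `α`-padded (at scale `Δ`) if, for every `x`, with probability
at least `1/2` the closed ball of radius `Δ/α` about `x` is contained in the block
containing `x`. -/
def RandPartition.IsPadded {X : Type} [Fintype X] [DecidableEq X]
    (μ : RandPartition X) (d : X → X → ℝ) (Δ α : ℝ) : Prop :=
  ∀ x : X, (1 : ℝ) / 2 ≤
    ∑ P : X → Finset X, if ∀ y, d x y ≤ Δ / α → y ∈ P x then μ.prob P else 0

/-- The modulus of padded decomposability `α(X,d)`: the least `α ≥ 1` such that for every
`Δ > 0` the space admits a `Δ`-bounded `α`-padded random partition. -/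
def paddedModulus (X : Type) [Fintype X] [DecidableEq X] (d : X → X → ℝ) : ℝ :=
  sInf {α : ℝ | 1 ≤ α ∧
    ∀ Δ : ℝ, 0 < Δ → ∃ μ : RandPartition X, μ.IsBounded d Δ ∧ μ.IsPadded d Δ α}

/-!
Let `n = |X|` and let `r(u)` be the least radius whose closed ball about `u` holds more than
`n/2` points. Two such balls meet, so `d(u,v) ≤ r(u) + r(v)` and `Σ d(u,v)^p ≤ 2^p n Σ r(u)^p`;
and for every `u` at least `n/2` points `v` are far from `u`, i.e. `d(u,v) > r(u)/2`.

Give `u` the dyadic scale `k(u) = ⌊log₂ r(u)⌋`. Draw, independently for each scale `i`, a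
`2^i/4`-bounded `α`-padded random partition, and label every block by an independent fair coin.
Let `S` be the set of points whose block at their own scale is labelled `false`, and
`f = d(·, S)`, a non-expansive map. Since `r` is 1-Lipschitz, a point `y` with
`d(u,y) < r(u)/(16α)` has `|k(y) - k(u)| ≤ 1` and lies in the padded ball about `u` at scale
`k(y)`. So if `u` is padded at the three scales `k(u) - 1, k(u), k(u) + 1` (probability `≥ 1/8`),
its three blocks are labelled `true` and `v ∈ S`, then `|f(u) - f(v)| ≥ r(u)/(16α)`. For far `v`
the block of `v` is none of those of `u` (they have diameter `≤ r(u)/2`), so given the partitions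
the four labels are independent: the event has probability `≥ 1/128`. Averaging,
`n Σ r(u)^p ≲ α^p 𝔼 Σ |f(u) - f(v)|^p`, and some outcome is at least the average. As `α(X,d)` is
an infimum, we run this with an admissible `α < 2 α(X,d)`.
-/

open Finset

section ProductWeights

variable {ι β : Type*} [Fintype ι] [DecidableEq ι] [Fintype β]

theorem sum_prod_mul_ite_forall (w : ι → β → ℝ) (T : Finset ι) (E : ι → β → Prop)
    [∀ i b, Decidable (E i b)] (hw : ∀ i ∉ T, ∑ b, w i b = 1) :
    ∑ a : ι → β, (∏ i, w i (a i)) * (if ∀ i ∈ T, E i (a i) then 1 else 0) =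
      ∏ i ∈ T, ∑ b with E i b, w i b := by
  have hind (a : ι → β) : (if ∀ i ∈ T, E i (a i) then (1 : ℝ) else 0) =
      ∏ i, if i ∈ T then (if E i (a i) then 1 else 0) else 1 := by
    rw [prod_ite_mem, univ_inter, prod_boole]
    congr
  have hfactor (i : ι) : ∑ b, w i b * (if i ∈ T then (if E i b then 1 else 0) else 1) =
      if i ∈ T then ∑ b with E i b, w i b else 1 := by
    split_ifs with hi
    · simp only [mul_boole, sum_filter]
    · simp only [mul_one, hw i hi]
  simp_rw [hind, ← prod_mul_distrib]
  rw [← Fintype.prod_sum (κ := fun _ => β)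
      fun i b => w i b * if i ∈ T then (if E i b then 1 else 0) else 1,
    prod_congr rfl fun i _ => hfactor i, prod_ite_mem, univ_inter]

theorem sum_prod_eq_one (w : ι → β → ℝ) (hw : ∀ i, ∑ b, w i b = 1) :
    ∑ a : ι → β, ∏ i, w i (a i) = 1 := by
  simpa using sum_prod_mul_ite_forall w ∅ (fun _ _ => True) fun i _ => hw i

end ProductWeights

theorem exists_le_of_le_sum_mul {Ω : Type*} [Fintype Ω] [Nonempty Ω] {W g : Ω → ℝ}
    (hW : ∀ ω, 0 ≤ W ω) (hW1 : ∑ ω, W ω = 1) {t : ℝ} (ht : t ≤ ∑ ω, W ω * g ω) :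
    ∃ ω, t ≤ g ω := by
  obtain ⟨ω₀, -, hmax⟩ := exists_max_image univ g univ_nonempty
  refine ⟨ω₀, ht.trans ?_⟩
  calc ∑ ω, W ω * g ω ≤ ∑ ω, W ω * g ω₀ :=
        sum_le_sum fun ω _ => mul_le_mul_of_nonneg_left (hmax ω (mem_univ ω)) (hW ω)
    _ = g ω₀ := by rw [← sum_mul, hW1, one_mul]

theorem rpow_add_le_mul_rpow_add_rpow {a b p : ℝ} (ha : 0 ≤ a) (hb : 0 ≤ b)
    (hp : 1 ≤ p) : (a + b) ^ p ≤ 2 ^ (p - 1) * (a ^ p + b ^ p) := by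
  exact_mod_cast NNReal.rpow_add_le_mul_rpow_add_rpow ⟨a, ha⟩ ⟨b, hb⟩ hp

theorem boole_le_boole {M : Type*} [Zero M] [One M] [Preorder M] [ZeroLEOneClass M]
    {p q : Prop} [Decidable p] [Decidable q] (h : p → q) :
    (if p then (1 : M) else 0) ≤ if q then 1 else 0 := by
  by_cases hp : p
  · simp [hp, h]
  · rw [if_neg hp]
    split_ifs <;> simp

section MedianRadius

variable {X : Type*} [MetricSpace X] [Fintype X]

/-- The infimum runs over the finitely many distances from `u`, so it is attained. -/
def medianRadius (u : X) : ℝ :=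
  sInf {s | s ∈ Set.range (dist u) ∧ Fintype.card X / 2 < #{w | dist u w ≤ s}}

theorem medianRadius_mem (u : X) :
    medianRadius u ∈ {s | s ∈ Set.range (dist u) ∧ Fintype.card X / 2 < #{w | dist u w ≤ s}} := by
  refine Set.Nonempty.csInf_mem ?_ ((Set.finite_range (dist u)).subset fun _ hs => hs.1)
  obtain ⟨w₀, -, hw₀⟩ := exists_max_image univ (dist u) ⟨u, mem_univ u⟩
  refine ⟨dist u w₀, ⟨w₀, rfl⟩, ?_⟩
  rw [filter_true_of_mem fun w _ => hw₀ w (mem_univ w), card_univ]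
  exact Nat.div_lt_self (Fintype.card_pos_iff.mpr ⟨u⟩) one_lt_two

theorem medianRadius_nonneg (u : X) : 0 ≤ medianRadius u := by
  obtain ⟨⟨w, hw⟩, -⟩ := medianRadius_mem u
  exact hw ▸ dist_nonneg

theorem half_card_lt_card_closedBall_medianRadius (u : X) :
    Fintype.card X / 2 < #{w | dist u w ≤ medianRadius u} :=
  (medianRadius_mem u).2

theorem medianRadius_le {u : X} {s : ℝ} (h : Fintype.card X / 2 < #{w | dist u w ≤ s}) :
    medianRadius u ≤ s := by
  obtain ⟨w₀, hw₀s, hw₀⟩ := exists_max_image {w | dist u w ≤ s} (dist u)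
    (card_pos.mp (Nat.zero_lt_of_lt h))
  have hmem : Fintype.card X / 2 < #{w | dist u w ≤ dist u w₀} :=
    h.trans_le <| card_le_card fun w hw => by simpa using hw₀ w hw
  unfold medianRadius
  calc _ ≤ dist u w₀ :=
        csInf_le ((Set.finite_range (dist u)).subset fun _ hs => hs.1).bddBelow
          (by exact ⟨⟨w₀, rfl⟩, hmem⟩)
    _ ≤ s := by simpa using hw₀s

theorem card_closedBall_le_half {u : X} {s : ℝ} (h : s < medianRadius u) :
    #{w | dist u w ≤ s} ≤ Fintype.card X / 2 :=
  not_lt.mp fun h' => (medianRadius_le h').not_gt h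

theorem medianRadius_pos [Nontrivial X] (u : X) : 0 < medianRadius u := by
  have h2 : 1 < #{w | dist u w ≤ medianRadius u} := by
    have := Fintype.one_lt_card (α := X)
    have := half_card_lt_card_closedBall_medianRadius u
    omega
  obtain ⟨w, hw, hwu⟩ := exists_mem_ne h2 u
  exact (dist_pos.mpr hwu.symm).trans_le (by simpa using hw)

theorem medianRadius_le_add_dist (u v : X) : medianRadius v ≤ medianRadius u + dist u v := by
  refine medianRadius_le ((half_card_lt_card_closedBall_medianRadius u).trans_le
    (card_le_card fun w hw => ?_))
  simp only [mem_filter, mem_univ, true_and] at hw ⊢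
  linarith [dist_triangle v u w, dist_comm u v]

theorem dist_le_medianRadius_add_medianRadius (u v : X) :
    dist u v ≤ medianRadius u + medianRadius v := by
  have hu := half_card_lt_card_closedBall_medianRadius u
  have hv := half_card_lt_card_closedBall_medianRadius v
  set Bu : Finset X := {w | dist u w ≤ medianRadius u}
  set Bv : Finset X := {w | dist v w ≤ medianRadius v}
  have := card_union_add_card_inter Bu Bv
  have := card_le_univ (Bu ∪ Bv)
  obtain ⟨w, hw⟩ : (Bu ∩ Bv).Nonempty := card_pos.mp (by omega)
  simp only [Bu, Bv, mem_inter, mem_filter, mem_univ, true_and] at hw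
  linarith [dist_triangle u w v, dist_comm v w]

theorem half_card_le_card_far [Nontrivial X] (u : X) :
    (Fintype.card X : ℝ) / 2 ≤ #{v | medianRadius u / 2 < dist u v} := by
  have hnear := card_closedBall_le_half (half_lt_self (medianRadius_pos u))
  have hsplit := card_filter_add_card_filter_not (s := univ) fun v => dist u v ≤ medianRadius u / 2
  simp only [not_le, card_univ] at hsplit
  rw [div_le_iff₀ two_pos]
  exact_mod_cast (by omega : Fintype.card X ≤ #{v | medianRadius u / 2 < dist u v} * 2)

theorem sum_sum_dist_rpow_le {p : ℝ} (hp : 1 ≤ p) :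
    ∑ u : X, ∑ v : X, dist u v ^ p ≤
      2 ^ p * Fintype.card X * ∑ u : X, medianRadius u ^ p := by
  have hpair (u v : X) : dist u v ^ p ≤ 2 ^ (p - 1) * (medianRadius u ^ p + medianRadius v ^ p) :=
    (Real.rpow_le_rpow dist_nonneg (dist_le_medianRadius_add_medianRadius u v)
      (zero_le_one.trans hp)).trans
      (rpow_add_le_mul_rpow_add_rpow (medianRadius_nonneg u) (medianRadius_nonneg v) hp)
  refine (sum_le_sum fun u _ => sum_le_sum fun v _ => hpair u v).trans_eq ?_
  simp only [← mul_sum, sum_add_distrib, sum_const, card_univ, nsmul_eq_mul,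
    Real.rpow_sub_one two_ne_zero]
  ring

end MedianRadius

section Scales

variable {X : Type*} [MetricSpace X] [Fintype X]

def scale (u : X) : ℤ := Int.log 2 (medianRadius u)

theorem zpow_scale_le [Nontrivial X] (u : X) : (2 : ℝ) ^ scale u ≤ medianRadius u := by
  simpa [scale] using Int.zpow_log_le_self (b := 2) one_lt_two (medianRadius_pos u)

theorem medianRadius_lt_zpow_scale_add_one (u : X) : medianRadius u < 2 ^ (scale u + 1) := by
  simpa [scale] using Int.lt_zpow_succ_log_self (b := 2) one_lt_two (medianRadius u)

theorem scale_mem_Icc [Nontrivial X] {u y : X} (h : dist u y ≤ medianRadius u / 2) :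
    scale y ∈ Icc (scale u - 1) (scale u + 1) := by
  have hlo := medianRadius_le_add_dist y u
  have hhi := medianRadius_le_add_dist u y
  have h2k := zpow_scale_le u
  have h2k1 := medianRadius_lt_zpow_scale_add_one u
  rw [dist_comm] at hlo
  rw [zpow_add_one₀ two_ne_zero] at h2k1
  have hy := medianRadius_pos y
  rw [mem_Icc]
  constructor
  · refine (Int.zpow_le_iff_le_log (b := 2) one_lt_two hy).mp ?_
    rw [Nat.cast_ofNat, zpow_sub_one₀ two_ne_zero]
    linarith
  · have : medianRadius y < (2 : ℕ) ^ (scale u + 2) := by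
      rw [Nat.cast_ofNat, zpow_add₀ two_ne_zero, zpow_two]
      linarith
    have := (Int.lt_zpow_iff_log_lt (b := 2) one_lt_two hy).mp this
    rw [scale]
    omega

/-- Partitions are drawn only at the scales within one of some `scale u`, so that the sample
space is finite. -/
def scales (X : Type*) [MetricSpace X] [Fintype X] : Finset ℤ :=
  univ.biUnion fun u : X => Icc (scale u - 1) (scale u + 1)

def scaleOf (x : X) : scales X :=
  ⟨scale x, mem_biUnion.mpr ⟨x, mem_univ x, mem_Icc.mpr ⟨by omega, by omega⟩⟩⟩

def nearScales (u : X) : Finset (scales X) :=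
  (Icc (scale u - 1) (scale u + 1)).subtype (· ∈ scales X)

theorem mem_nearScales {u : X} {i : scales X} :
    i ∈ nearScales u ↔ (i : ℤ) ∈ Icc (scale u - 1) (scale u + 1) :=
  mem_subtype

theorem card_nearScales_le (u : X) : #(nearScales u) ≤ 3 := by
  rw [nearScales, card_subtype]
  exact (card_filter_le _ _).trans (by rw [Int.card_Icc]; omega)

end Scales

section ZeroSet

variable {X : Type*} [MetricSpace X] [Fintype X]

def zeroSet (a : scales X → X → Finset X) (b : scales X × Finset X → Bool) : Finset X :=
  {x | b (scaleOf x, a (scaleOf x) x) = false}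

def distZeroSet (a : scales X → X → Finset X) (b : scales X × Finset X → Bool) (x : X) : ℝ :=
  Metric.infDist x (zeroSet a b : Set X)

theorem abs_distZeroSet_sub_le (a : scales X → X → Finset X) (b : scales X × Finset X → Bool)
    (x y : X) : |distZeroSet a b x - distZeroSet a b y| ≤ dist x y := by
  simpa [distZeroSet, Real.dist_eq] using
    (Metric.lipschitz_infDist_pt (zeroSet a b : Set X)).dist_le_mul x y

abbrev IsPaddedNear (α : ℝ) (a : scales X → X → Finset X) (u : X) : Prop :=
  ∀ i ∈ nearScales u, ∀ y, dist u y ≤ 2 ^ (i : ℤ) / 4 / α → y ∈ a i u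

variable [Nontrivial X] {a : scales X → X → Finset X} {b : scales X × Finset X → Bool}
  {α : ℝ} {u v : X}

theorem medianRadius_div_le_abs_distZeroSet_sub (hα : 1 ≤ α)
    (ha : ∀ i x, ∀ y ∈ a i x, a i y = a i x)
    (hpad : IsPaddedNear α a u)
    (hlabel : ∀ i ∈ nearScales u, b (i, a i u) = true) (hv : v ∈ zeroSet a b) :
    medianRadius u / (16 * α) ≤ |distZeroSet a b u - distZeroSet a b v| := by
  have hv0 : distZeroSet a b v = 0 := Metric.infDist_zero_of_mem (mem_coe.mpr hv)
  rw [hv0, sub_zero, distZeroSet, abs_of_nonneg Metric.infDist_nonneg,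
    Metric.le_infDist ⟨v, mem_coe.mpr hv⟩]
  intro y hy
  by_contra! hclose
  have hr := medianRadius_pos u
  have hα0 : 0 < α := one_pos.trans_le hα
  have hclose' : dist u y ≤ medianRadius u / 2 := by
    refine hclose.le.trans ?_
    rw [div_le_div_iff₀ (by positivity) two_pos]
    nlinarith
  have hscale := scale_mem_Icc hclose'
  have hnear : scaleOf y ∈ nearScales u := mem_nearScales.mpr hscale
  have hpadded : dist u y ≤ 2 ^ (scaleOf y : ℤ) / 4 / α := by
    have h2k1 := medianRadius_lt_zpow_scale_add_one u
    have hmono : (2 : ℝ) ^ (scale u - 1) ≤ 2 ^ scale y :=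
      zpow_le_zpow_right₀ one_le_two (mem_Icc.mp hscale).1
    rw [zpow_add_one₀ two_ne_zero] at h2k1
    rw [zpow_sub_one₀ two_ne_zero] at hmono
    refine hclose.le.trans ?_
    rw [div_div, div_le_div_iff₀ (by positivity) (by positivity)]
    change _ ≤ (2 : ℝ) ^ scale y * (16 * α)
    nlinarith
  have hyu := ha _ u y (hpad _ hnear y hpadded)
  have hy' : b (scaleOf y, a (scaleOf y) y) = false := by simpa [zeroSet] using hy
  rw [hyu, hlabel _ hnear] at hy'
  cases hy'

theorem block_ne_of_half_medianRadius_lt_dist (ha : ∀ i x, x ∈ a i x)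
    (hbd : ∀ i x, ∀ y ∈ a i x, ∀ z ∈ a i x, dist y z ≤ 2 ^ (i : ℤ) / 4)
    (hfar : medianRadius u / 2 < dist u v) {i : scales X} (hi : i ∈ nearScales u) :
    a i v ≠ a i u := by
  intro h
  have huv := hbd i u u (ha i u) v (h ▸ ha i v)
  have hi' : (2 : ℝ) ^ (i : ℤ) ≤ 2 ^ (scale u + 1) :=
    zpow_le_zpow_right₀ one_le_two (mem_Icc.mp (mem_nearScales.mp hi)).2
  rw [zpow_add_one₀ two_ne_zero] at hi'
  linarith [zpow_scale_le u]

end ZeroSet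

section Sampling

variable {X : Type} [MetricSpace X] [Fintype X] [DecidableEq X]

theorem sixteenth_le_sum_labels {a : scales X → X → Finset X} {u v : X}
    (hsep : ∀ i ∈ nearScales u, a i v ≠ a i u) :
    1 / 16 ≤ ∑ b : scales X × Finset X → Bool, (∏ _q : scales X × Finset X, (1 / 2 : ℝ)) *
      if (∀ i ∈ nearScales u, b (i, a i u) = true) ∧ v ∈ zeroSet a b then 1 else 0 := by
  set q₀ := (scaleOf v, a (scaleOf v) v)
  set s : Finset (scales X × Finset X) := insert q₀ ((nearScales u).image fun i => (i, a i u))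
  have hcard : #s ≤ 4 :=
    (card_insert_le _ _).trans (Nat.succ_le_succ (card_image_le.trans (card_nearScales_le u)))
  have hq₀ : ∀ i ∈ nearScales u, (i, a i u) ≠ q₀ := fun i hi h =>
    hsep i hi (by rw [Prod.mk.injEq] at h; obtain ⟨rfl, h⟩ := h; exact h.symm)
  have hgood (b : scales X × Finset X → Bool) (hb : ∀ q ∈ s, b q = decide (q ≠ q₀)) :
      (∀ i ∈ nearScales u, b (i, a i u) = true) ∧ v ∈ zeroSet a b := by
    refine ⟨fun i hi => ?_, ?_⟩
    · simpa [hq₀ i hi] using hb _ (mem_insert_of_mem (mem_image_of_mem _ hi))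
    · simpa [zeroSet] using hb q₀ (mem_insert_self _ _)
  have hagree := sum_prod_mul_ite_forall (fun _ _ => (1 / 2 : ℝ)) s
    (fun q β => β = decide (q ≠ q₀)) fun _ _ => by norm_num
  simp only [filter_eq', mem_univ, if_true, sum_singleton] at hagree
  calc (1 / 16 : ℝ) = (1 / 2) ^ 4 := by norm_num
    _ ≤ (1 / 2) ^ #s := pow_le_pow_of_le_one (by norm_num) (by norm_num) hcard
    _ = ∏ _q ∈ s, (1 / 2 : ℝ) := (prod_const _).symm
    _ = _ := hagree.symm
    _ ≤ _ := sum_le_sum fun b _ => mul_le_mul_of_nonneg_left (boole_le_boole (hgood b))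
      (by positivity)

theorem eighth_le_sum_padded (μ : scales X → RandPartition X) {α : ℝ}
    (hpad : ∀ i : scales X, (μ i).IsPadded (fun x y => dist x y) (2 ^ (i : ℤ) / 4) α) (u : X) :
    1 / 8 ≤ ∑ a : scales X → X → Finset X, (∏ i, (μ i).prob (a i)) *
      if IsPaddedNear α a u then 1 else 0 := by
  rw [sum_prod_mul_ite_forall _ _
    (fun (i : scales X) (P : X → Finset X) => ∀ y, dist u y ≤ 2 ^ (i : ℤ) / 4 / α → y ∈ P u)
    fun i _ => (μ i).sum_one]
  calc (1 / 8 : ℝ) = (1 / 2) ^ 3 := by norm_num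
    _ ≤ (1 / 2) ^ #(nearScales u) :=
      pow_le_pow_of_le_one (by norm_num) (by norm_num) (card_nearScales_le u)
    _ = ∏ _i ∈ nearScales u, 1 / 2 := (prod_const _).symm
    _ ≤ _ := prod_le_prod (fun _ _ => by norm_num) fun i _ => by
      simpa only [sum_filter] using hpad i u

/-- The partitions at the different scales are drawn independently from `μ`, and the blocks
receive independent fair labels. -/
def sampleWeight (μ : scales X → RandPartition X)
    (ω : (scales X → X → Finset X) × (scales X × Finset X → Bool)) : ℝ :=
  (∏ i, (μ i).prob (ω.1 i)) * ∏ _q : scales X × Finset X, (1 / 2 : ℝ)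

theorem sampleWeight_nonneg (μ : scales X → RandPartition X)
    (ω : (scales X → X → Finset X) × (scales X × Finset X → Bool)) : 0 ≤ sampleWeight μ ω :=
  mul_nonneg (prod_nonneg fun i _ => (μ i).nonneg _) (by positivity)

theorem sum_sampleWeight (μ : scales X → RandPartition X) : ∑ ω, sampleWeight μ ω = 1 := by
  rw [Fintype.sum_prod_type]
  simp only [sampleWeight, ← mul_sum, ← sum_mul]
  rw [sum_prod_eq_one _ fun i => (μ i).sum_one,
    sum_prod_eq_one (fun (_ : scales X × Finset X) (_ : Bool) => (1 / 2 : ℝ)) (by norm_num),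
    one_mul]

variable [Nontrivial X] {μ : scales X → RandPartition X} {α p : ℝ}

theorem rpow_div_le_sum_labels_mul (hα : 1 ≤ α) (hp : 0 ≤ p)
    (hbd : ∀ i, (μ i).IsBounded (fun x y => dist x y) (2 ^ (i : ℤ) / 4))
    {a : scales X → X → Finset X} (ha : ∀ i, (μ i).prob (a i) ≠ 0) {u v : X}
    (hpa : IsPaddedNear α a u) (hfar : medianRadius u / 2 < dist u v) :
    (medianRadius u / (16 * α)) ^ p / 16 ≤ ∑ b, (∏ _q : scales X × Finset X, (1 / 2 : ℝ)) *
      |distZeroSet a b u - distZeroSet a b v| ^ p := by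
  have hρ : 0 ≤ medianRadius u / (16 * α) := div_nonneg (medianRadius_nonneg u) (by linarith)
  have hsep := fun i (hi : i ∈ nearScales u) => block_ne_of_half_medianRadius_lt_dist
    (fun i x => ((μ i).isPartition _ (ha i) x).1) (fun i => hbd i (a i) (ha i)) hfar hi
  calc (medianRadius u / (16 * α)) ^ p / 16
      ≤ (medianRadius u / (16 * α)) ^ p * ∑ b, (∏ _q : scales X × Finset X, (1 / 2 : ℝ)) *
          if (∀ i ∈ nearScales u, b (i, a i u) = true) ∧ v ∈ zeroSet a b then 1 else 0 := by
        nlinarith [sixteenth_le_sum_labels hsep, Real.rpow_nonneg hρ p]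
    _ ≤ _ := by
        rw [mul_sum]
        refine sum_le_sum fun b _ => ?_
        rw [mul_left_comm]
        refine mul_le_mul_of_nonneg_left ?_ (by positivity)
        split_ifs with hb
        · rw [mul_one]
          exact Real.rpow_le_rpow hρ (medianRadius_div_le_abs_distZeroSet_sub hα
            (fun i x => ((μ i).isPartition _ (ha i) x).2) hpa hb.1 hb.2) hp
        · rw [mul_zero]
          positivity

theorem rpow_div_le_sum_sampleWeight_mul (hα : 1 ≤ α) (hp : 0 ≤ p)
    (hbd : ∀ i, (μ i).IsBounded (fun x y => dist x y) (2 ^ (i : ℤ) / 4))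
    (hpad : ∀ i, (μ i).IsPadded (fun x y => dist x y) (2 ^ (i : ℤ) / 4) α)
    {u v : X} (hfar : medianRadius u / 2 < dist u v) :
    (medianRadius u / (16 * α)) ^ p / 128 ≤
      ∑ ω, sampleWeight μ ω * |distZeroSet ω.1 ω.2 u - distZeroSet ω.1 ω.2 v| ^ p := by
  set ρp := (medianRadius u / (16 * α)) ^ p
  have hρp : 0 ≤ ρp :=
    Real.rpow_nonneg (div_nonneg (medianRadius_nonneg u) (by linarith)) p
  have hterm (a : scales X → X → Finset X) :
      (∏ i, (μ i).prob (a i)) * ((if IsPaddedNear α a u then 1 else 0) * (ρp / 16)) ≤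
        (∏ i, (μ i).prob (a i)) * ∑ b, (∏ _q : scales X × Finset X, (1 / 2 : ℝ)) *
          |distZeroSet a b u - distZeroSet a b v| ^ p := by
    by_cases ha : ∀ i, (μ i).prob (a i) ≠ 0
    · refine mul_le_mul_of_nonneg_left ?_ (prod_nonneg fun i _ => (μ i).nonneg _)
      split_ifs with hpa
      · rw [one_mul]
        exact rpow_div_le_sum_labels_mul hα hp hbd ha hpa hfar
      · rw [zero_mul]
        positivity
    · push Not at ha
      obtain ⟨i, hi⟩ := ha
      rw [prod_eq_zero (f := fun i => (μ i).prob (a i)) (mem_univ i) hi, zero_mul, zero_mul]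
  calc ρp / 128 = 1 / 8 * (ρp / 16) := by ring
    _ ≤ (∑ a, (∏ i, (μ i).prob (a i)) * if IsPaddedNear α a u then 1 else 0) * (ρp / 16) :=
      mul_le_mul_of_nonneg_right (eighth_le_sum_padded μ hpad u) (by positivity)
    _ = ∑ a, (∏ i, (μ i).prob (a i)) * ((if IsPaddedNear α a u then 1 else 0) * (ρp / 16)) := by
      rw [sum_mul]
      simp only [mul_assoc]
    _ ≤ _ := sum_le_sum fun a _ => hterm a
    _ = _ := by
      rw [Fintype.sum_prod_type]
      simp only [sampleWeight, mul_assoc, mul_sum]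

theorem card_mul_sum_rpow_div_le_sum_sampleWeight_mul (hα : 1 ≤ α) (hp : 0 ≤ p)
    (hbd : ∀ i, (μ i).IsBounded (fun x y => dist x y) (2 ^ (i : ℤ) / 4))
    (hpad : ∀ i, (μ i).IsPadded (fun x y => dist x y) (2 ^ (i : ℤ) / 4) α) :
    Fintype.card X * (∑ u : X, medianRadius u ^ p) / (256 * (16 * α) ^ p) ≤
      ∑ ω, sampleWeight μ ω *
        ∑ u : X, ∑ v : X, |distZeroSet ω.1 ω.2 u - distZeroSet ω.1 ω.2 v| ^ p := by
  have hα0 : 0 < α := one_pos.trans_le hα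
  calc Fintype.card X * (∑ u : X, medianRadius u ^ p) / (256 * (16 * α) ^ p)
      = ∑ u : X, (Fintype.card X : ℝ) / 2 * ((medianRadius u / (16 * α)) ^ p / 128) := by
        simp only [Real.div_rpow (medianRadius_nonneg _) (by positivity : (0 : ℝ) ≤ 16 * α),
          mul_sum, sum_div]
        refine sum_congr rfl fun u _ => by ring
    _ ≤ ∑ u : X, ∑ _v ∈ {v | medianRadius u / 2 < dist u v},
          (medianRadius u / (16 * α)) ^ p / 128 := by
        simp only [sum_const, nsmul_eq_mul]
        exact sum_le_sum fun u _ => mul_le_mul_of_nonneg_right (half_card_le_card_far u)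
          (div_nonneg (Real.rpow_nonneg (div_nonneg (medianRadius_nonneg u) (by positivity)) p)
            (by norm_num))
    _ ≤ ∑ u : X, ∑ v ∈ {v | medianRadius u / 2 < dist u v}, ∑ ω, sampleWeight μ ω *
          |distZeroSet ω.1 ω.2 u - distZeroSet ω.1 ω.2 v| ^ p :=
        sum_le_sum fun u _ => sum_le_sum fun v hv =>
          rpow_div_le_sum_sampleWeight_mul hα hp hbd hpad (mem_filter.mp hv).2
    _ ≤ ∑ u : X, ∑ v : X, ∑ ω, sampleWeight μ ω *
          |distZeroSet ω.1 ω.2 u - distZeroSet ω.1 ω.2 v| ^ p :=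
        sum_le_sum fun u _ => sum_le_sum_of_subset_of_nonneg (filter_subset _ _) fun v _ _ =>
          sum_nonneg fun ω _ => mul_nonneg (sampleWeight_nonneg μ ω) (by positivity)
    _ = _ := by
        simp only [mul_sum]
        exact (sum_congr rfl fun u _ => sum_comm).trans sum_comm

end Sampling

section Embedding

variable {X : Type} [MetricSpace X] [Fintype X] [DecidableEq X]

theorem exists_nonexpansive_sum_dist_rpow_le {α : ℝ} (hα : 1 ≤ α)
    (hdec : ∀ Δ : ℝ, 0 < Δ → ∃ μ : RandPartition X,
      μ.IsBounded (fun x y => dist x y) Δ ∧ μ.IsPadded (fun x y => dist x y) Δ α)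
    {p : ℝ} (hp : 1 ≤ p) :
    ∃ f : X → ℝ, (∀ x y, |f x - f y| ≤ dist x y) ∧
      ∑ u : X, ∑ v : X, dist u v ^ p ≤ 256 * (32 * α) ^ p * ∑ u : X, ∑ v : X, |f u - f v| ^ p := by
  have hp0 : 0 < p := one_pos.trans_le hp
  rcases subsingleton_or_nontrivial X with hX | hX
  · have hdist (u v : X) : dist u v = 0 := by rw [Subsingleton.elim u v, dist_self]
    refine ⟨0, fun x y => by simp [hdist], ?_⟩
    simp [hdist, Real.zero_rpow hp0.ne']
  choose μ hbd hpad using fun i : scales X => hdec (2 ^ (i : ℤ) / 4) (by positivity)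
  obtain ⟨ω, hω⟩ := exists_le_of_le_sum_mul (sampleWeight_nonneg μ) (sum_sampleWeight μ)
    (card_mul_sum_rpow_div_le_sum_sampleWeight_mul hα hp0.le hbd hpad)
  rw [div_le_iff₀ (by positivity)] at hω
  refine ⟨distZeroSet ω.1 ω.2, abs_distZeroSet_sub_le ω.1 ω.2, ?_⟩
  calc ∑ u : X, ∑ v : X, dist u v ^ p ≤ 2 ^ p * (Fintype.card X * ∑ u : X, medianRadius u ^ p) := by
        rw [← mul_assoc]
        exact sum_sum_dist_rpow_le hp
    _ ≤ 2 ^ p * ((∑ u : X, ∑ v : X, |distZeroSet ω.1 ω.2 u - distZeroSet ω.1 ω.2 v| ^ p) *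
          (256 * (16 * α) ^ p)) :=
        mul_le_mul_of_nonneg_left hω (by positivity)
    _ = _ := by
        rw [show 32 * α = 2 * (16 * α) by ring,
          Real.mul_rpow zero_le_two (by linarith)]
        ring

end Embedding

namespace RandPartition

variable {X : Type} [Fintype X] [DecidableEq X]

def dirac (P : X → Finset X) (hP : ∀ x, x ∈ P x ∧ ∀ y ∈ P x, P y = P x) : RandPartition X where
  prob Q := if Q = P then 1 else 0
  nonneg Q := by split_ifs <;> norm_num
  sum_one := by simp
  isPartition Q hQ := by
    obtain rfl : Q = P := by_contra fun h => hQ (if_neg h)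
    exact hP

variable {P : X → Finset X} (hP : ∀ x, x ∈ P x ∧ ∀ y ∈ P x, P y = P x) {d : X → X → ℝ}

theorem isBounded_dirac {Δ : ℝ} (h : ∀ x, ∀ y ∈ P x, ∀ z ∈ P x, d y z ≤ Δ) :
    (dirac P hP).IsBounded d Δ := by
  intro Q hQ
  obtain rfl : Q = P := by_contra fun h => hQ (if_neg h)
  exact h

theorem isPadded_dirac {Δ α : ℝ} (h : ∀ x y, d x y ≤ Δ / α → y ∈ P x) :
    (dirac P hP).IsPadded d Δ α := by
  intro x
  rw [sum_eq_single P (fun Q _ hQ => by simp [dirac, hQ]) (by simp), if_pos (h x)]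
  norm_num [dirac]

end RandPartition

theorem exists_pos_forall_le_dist (X : Type*) [MetricSpace X] [Fintype X] :
    ∃ ε > 0, ∀ x y : X, x ≠ y → ε ≤ dist x y := by
  rcases (univ : Finset X).offDiag.eq_empty_or_nonempty with h | h
  · refine ⟨1, one_pos, fun x y hxy => ?_⟩
    have : (x, y) ∈ (univ : Finset X).offDiag := mem_offDiag.mpr ⟨mem_univ x, mem_univ y, hxy⟩
    simp [h] at this
  · obtain ⟨q, hq, hmin⟩ := exists_min_image _ (fun q : X × X => dist q.1 q.2) h
    exact ⟨dist q.1 q.2, dist_pos.mpr (mem_offDiag.mp hq).2.2, fun x y hxy =>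
      hmin (x, y) (mem_offDiag.mpr ⟨mem_univ x, mem_univ y, hxy⟩)⟩

/-- Singletons are padded as soon as `Δ / α` is below the least nonzero distance, and a single
block is bounded as soon as `Δ` exceeds the diameter. -/
theorem exists_padded_decomposition (X : Type) [MetricSpace X] [Fintype X] [DecidableEq X] :
    ∃ α, 1 ≤ α ∧ ∀ Δ : ℝ, 0 < Δ → ∃ μ : RandPartition X,
      μ.IsBounded (fun x y => dist x y) Δ ∧ μ.IsPadded (fun x y => dist x y) Δ α := by
  obtain ⟨ε, hε, hεle⟩ := exists_pos_forall_le_dist X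
  set D := Metric.diam (Set.univ : Set X)
  have hD (x y : X) : dist x y ≤ D :=
    Metric.dist_le_diam_of_mem Set.finite_univ.isBounded trivial trivial
  have hD0 : 0 ≤ D / ε := div_nonneg Metric.diam_nonneg hε.le
  refine ⟨1 + D / ε, by linarith, fun Δ hΔ => ?_⟩
  by_cases hDΔ : D ≤ Δ
  · exact ⟨.dirac (fun _ => univ) fun x => ⟨mem_univ x, fun _ _ => rfl⟩,
      RandPartition.isBounded_dirac _ fun _ y _ z _ => (hD y z).trans hDΔ,
      RandPartition.isPadded_dirac _ fun _ y _ => mem_univ y⟩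
  refine ⟨.dirac (fun x => {x}) fun x => ⟨mem_singleton_self x, fun y hy => by
      rw [mem_singleton.mp hy]⟩,
    RandPartition.isBounded_dirac _ fun x y hy z hz => ?_,
    RandPartition.isPadded_dirac _ fun x y hxy => ?_⟩
  · rw [mem_singleton.mp hy, mem_singleton.mp hz, dist_self]
    exact hΔ.le
  · by_contra hne
    have hsep := hεle x y (Ne.symm (mem_singleton.not.mp hne))
    rw [le_div_iff₀ (by positivity)] at hxy
    have : ε * (1 + D / ε) = ε + D := by field_simp
    nlinarith

theorem exists_padded_lt_two_mul_paddedModulus (X : Type) [MetricSpace X] [Fintype X]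
    [DecidableEq X] :
    ∃ α, 1 ≤ α ∧ α < 2 * paddedModulus X (fun x y => dist x y) ∧ ∀ Δ : ℝ, 0 < Δ →
      ∃ μ : RandPartition X,
        μ.IsBounded (fun x y => dist x y) Δ ∧ μ.IsPadded (fun x y => dist x y) Δ α := by
  obtain ⟨α₀, hα₀⟩ := exists_padded_decomposition X
  have hA : 1 ≤ paddedModulus X (fun x y => dist x y) := le_csInf ⟨α₀, hα₀⟩ fun _ h => h.1
  obtain ⟨α, ⟨hα, hdec⟩, hlt⟩ := exists_lt_of_csInf_lt ⟨α₀, hα₀⟩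
    (by linarith : paddedModulus X (fun x y => dist x y) < 2 * paddedModulus X _)
  exact ⟨α, hα, hlt, hdec⟩

/-- For every `p ≥ 1` there is a constant `C_p ≥ 1` such that every
finite metric space `(X, d)` admits a non-expansive map `f : X → ℝ` with
`Σ_{u,v} d(u,v)^p ≤ C_p · α(X,d)^p · Σ_{u,v} |f(u) - f(v)|^p`. -/
theorem statement_14 (p : ℝ) (hp : 1 ≤ p) :
    ∃ C : ℝ, 1 ≤ C ∧
      ∀ (X : Type) [MetricSpace X] [Fintype X] [DecidableEq X],
        ∃ f : X → ℝ, (∀ x y : X, |f x - f y| ≤ dist x y) ∧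
          ∑ u : X, ∑ v : X, dist u v ^ p ≤
            C * paddedModulus X (fun x y => dist x y) ^ p *
              ∑ u : X, ∑ v : X, |f u - f v| ^ p := by
  refine ⟨256 * 64 ^ p, ?_, fun X _ _ _ => ?_⟩
  · linarith [Real.one_le_rpow (by norm_num : (1 : ℝ) ≤ 64) (zero_le_one.trans hp)]
  obtain ⟨α, hα, hαA, hdec⟩ := exists_padded_lt_two_mul_paddedModulus X
  obtain ⟨f, hf, hsum⟩ := exists_nonexpansive_sum_dist_rpow_le hα hdec hp
  refine ⟨f, hf, hsum.trans (mul_le_mul_of_nonneg_right ?_ (by positivity))⟩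
  calc 256 * (32 * α) ^ p ≤ 256 * (64 * paddedModulus X (fun x y => dist x y)) ^ p :=
        mul_le_mul_of_nonneg_left
          (Real.rpow_le_rpow (by positivity) (by linarith) (zero_le_one.trans hp)) (by norm_num)
    _ = 256 * 64 ^ p * paddedModulus X (fun x y => dist x y) ^ p := by
        rw [Real.mul_rpow (by norm_num) (by linarith)]
        ring

end Formal
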